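/- arXiv:2510.24755 — 6 statements merged into one kernel-verified Lean document; each statement's English description precedes it below -/
import Mathlib

section
/- Let N ≥ 4 and let r = r₁r₂r₃ ∈ {0,1}³ be a single rule. For every interior position i with 2 ≤ i ≤ N−2, if x = x₁x₂ ∈ {0,1}² is a contiguous length-2 substring of r (i.e. x = r₁r₂ or x = r₂r₃) and z = z₁z₂ ∈ {0,1}² is not a contiguous length-2 substring of r, then φ^{i,i+1}_x ≥ φ^{i,i+1}_z. -/
/-- `occCount a x` : number of starting positions at which the rule `a` (a binary
string of length `k`) occurs as a contiguous substring of the binary string `x`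
of length `N`.  This is the value `F_N(a)(x)` of the transform. -/
def occCount {k N : ℕ} (a : Fin k → Bool) (x : Fin N → Bool) : ℕ :=
  ((List.range (N - k + 1)).filter
    (fun i => (List.ofFn a).isPrefixOf ((List.ofFn x).drop i))).length

/-- The duplet moment `φ^{p,q}_{x₁x₂}` for the single rule `r`:
the sum of `f_r(y) = F_N(r)(y)` over all strings `y` with `y p = x₁`, `y q = x₂`. -/
def duplet {N : ℕ} (r : Fin 3 → Bool) (p q : Fin N) (x1 x2 : Bool) : ℕ :=
  ∑ y : Fin N → Bool, if y p = x1 ∧ y q = x2 then occCount r y else 0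

/-!
Exchanging the sum over strings with the sum over positions writes `φ` as a sum over the
windows `j` of the number of strings with the prescribed pair that contain `r` at `j`. A window
missing both positions of the pair contributes the same for every pair: overwriting the two bits
is a bijection. Of the four windows meeting the pair, the two containing both positions force it
to be `r₁r₂` or `r₂r₃`, so they contribute nothing for `z`, while the other two fix four bits and
contribute at most `2 ^ (N - 4)` each. For `x` one of the two windows containing both positions
is compatible and fixes three bits, contributing `2 ^ (N - 3)` on its own.
-/

open Finset Function

section Counting

variable {ι κ β : Type*} [Fintype ι] [DecidableEq ι] [Fintype β] [DecidableEq β]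

theorem card_filter_forall_mem_apply_eq (S : Finset ι) (y₀ : ι → β) :
    #{y : ι → β | ∀ t ∈ S, y t = y₀ t} = Fintype.card β ^ (Fintype.card ι - #S) := by
  have : ({y : ι → β | ∀ t ∈ S, y t = y₀ t} : Finset _) =
      Fintype.piFinset fun t => if t ∈ S then {y₀ t} else univ := by
    ext y
    simp only [mem_filter, mem_univ, true_and, Fintype.mem_piFinset]
    refine forall_congr' fun t => ?_
    split_ifs <;> simp [*]
  rw [this, Fintype.card_piFinset, ← card_compl]
  simp [apply_ite, prod_ite, filter_not, compl_eq_univ_sdiff]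

theorem card_filter_forall_apply_embedding_eq [Fintype κ] [Inhabited β] (e : κ ↪ ι) (a : κ → β) :
    #{y : ι → β | ∀ s, y (e s) = a s} = Fintype.card β ^ (Fintype.card ι - Fintype.card κ) := by
  have key := card_filter_forall_mem_apply_eq (univ.map e) (extend e a default)
  simpa [e.injective.extend_apply] using key

theorem card_filter_le_of_forall_apply_embedding_eq [Fintype κ] [Inhabited β] (e : κ ↪ ι)
    (a : κ → β) {P : (ι → β) → Prop} [DecidablePred P] (h : ∀ y, P y → ∀ s, y (e s) = a s) :
    #{y | P y} ≤ Fintype.card β ^ (Fintype.card ι - Fintype.card κ) :=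
  (card_le_card (monotone_filter_right _ fun y _ => h y)).trans_eq
    (card_filter_forall_apply_embedding_eq e a)

theorem card_filter_apply_eq_and_indep {P : (ι → β) → Prop} [DecidablePred P] (t : ι)
    (hP : ∀ y b, P (update y t b) ↔ P y) (b c : β) :
    #{y | y t = b ∧ P y} = #{y | y t = c ∧ P y} := by
  refine card_nbij' (update · t c) (update · t b) ?_ ?_ ?_ ?_ <;> intro y hy <;>
    simp_all

end Counting

theorem length_filter_range (n : ℕ) (f : ℕ → Bool) :
    ((List.range n).filter f).length = #{j ∈ range n | f j} := by
  rw [card_def, filter_val, range_val, Multiset.range, Multiset.filter_coe, Multiset.coe_card]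
  simp

def windowEmb {k N : ℕ} (j : ℕ) (h : j + k ≤ N) : Fin k ↪ Fin N where
  toFun s := ⟨j + s, by omega⟩
  inj' s s' hss' := by simpa [Fin.ext_iff] using hss'

@[simp]
theorem windowEmb_apply_val {k N j : ℕ} (h : j + k ≤ N) (s : Fin k) :
    (windowEmb j h s : ℕ) = j + s := rfl

def OccursAt {α : Type*} {k N : ℕ} (a : Fin k → α) (x : Fin N → α) (j : ℕ) : Prop :=
  ∃ h : j + k ≤ N, ∀ s, x (windowEmb j h s) = a s

instance {α : Type*} [DecidableEq α] {k N : ℕ} (a : Fin k → α) (x : Fin N → α) (j : ℕ) :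
    Decidable (OccursAt a x j) :=
  inferInstanceAs (Decidable (∃ _, _))

theorem isPrefixOf_ofFn_drop_iff {α : Type*} [BEq α] [LawfulBEq α] {k N : ℕ} (a : Fin k → α)
    (x : Fin N → α) {j : ℕ} (hj : j ≤ N) :
    (List.ofFn a).isPrefixOf ((List.ofFn x).drop j) ↔ OccursAt a x j := by
  rw [List.isPrefixOf_iff_prefix, List.prefix_iff_getElem, OccursAt]
  simp only [List.length_ofFn, List.length_drop, List.getElem_ofFn, List.getElem_drop]
  constructor
  · rintro ⟨hk, h⟩
    exact ⟨by omega, fun s => (h s s.isLt).symm⟩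
  · rintro ⟨hk, h⟩
    exact ⟨by omega, fun s hs => (h ⟨s, hs⟩).symm⟩

theorem occCount_eq_card {k N : ℕ} (a : Fin k → Bool) (x : Fin N → Bool) :
    occCount a x = #{j ∈ range (N - k + 1) | OccursAt a x j} := by
  rw [occCount, length_filter_range]
  congr 1
  refine filter_congr fun j hj => isPrefixOf_ofFn_drop_iff a x ?_
  rw [mem_range] at hj
  omega

def windowCount {k N : ℕ} (r : Fin k → Bool) (p q : Fin N) (b₁ b₂ : Bool) (j : ℕ) : ℕ :=
  #{y : Fin N → Bool | y p = b₁ ∧ y q = b₂ ∧ OccursAt r y j}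

theorem duplet_eq_sum_windowCount {N : ℕ} (r : Fin 3 → Bool) (p q : Fin N) (b₁ b₂ : Bool) :
    duplet r p q b₁ b₂ = ∑ j ∈ range (N - 3 + 1), windowCount r p q b₁ b₂ j := by
  simp only [duplet, windowCount, occCount_eq_card, card_filter, ← and_assoc]
  rw [sum_comm]
  refine sum_congr rfl fun y _ => ?_
  split_ifs with h <;> simp [h]

section Windows

variable {k N : ℕ} {r : Fin k → Bool} {p q : Fin N} {j : ℕ}

theorem windowCount_eq_of_notMem (hpq : p ≠ q) (hp : ¬ (j ≤ p ∧ (p : ℕ) < j + k))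
    (hq : ¬ (j ≤ q ∧ (q : ℕ) < j + k)) (b₁ b₂ c₁ c₂ : Bool) :
    windowCount r p q b₁ b₂ j = windowCount r p q c₁ c₂ j := by
  have occursAt_update {t : Fin N} (ht : ¬ (j ≤ t ∧ (t : ℕ) < j + k)) (y : Fin N → Bool)
      (b : Bool) : OccursAt r (update y t b) j ↔ OccursAt r y j := by
    refine exists_congr fun h => forall_congr' fun s => ?_
    rw [update_of_ne]
    rintro rfl
    simp at ht
  calc windowCount r p q b₁ b₂ j = #{y | y p = c₁ ∧ y q = b₂ ∧ OccursAt r y j} :=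
        card_filter_apply_eq_and_indep p
          (fun y b => by rw [update_of_ne hpq.symm, occursAt_update hp]) b₁ c₁
    _ = #{y | y q = b₂ ∧ y p = c₁ ∧ OccursAt r y j} := by simp only [and_left_comm]
    _ = #{y | y q = c₂ ∧ y p = c₁ ∧ OccursAt r y j} :=
        card_filter_apply_eq_and_indep q
          (fun y b => by rw [update_of_ne hpq, occursAt_update hq]) b₂ c₂
    _ = windowCount r p q c₁ c₂ j := by simp only [windowCount, and_left_comm]

theorem windowCount_eq_zero {s t : Fin k} (hp : (p : ℕ) = j + s) (hq : (q : ℕ) = j + t)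
    {b₁ b₂ : Bool} (hb : ¬ (b₁ = r s ∧ b₂ = r t)) : windowCount r p q b₁ b₂ j = 0 := by
  refine card_eq_zero.2 (filter_eq_empty_iff.2 ?_)
  rintro y - ⟨rfl, rfl, h, hy⟩
  refine hb ⟨?_, ?_⟩
  · rw [← hy s]; congr; ext; simp [hp]
  · rw [← hy t]; congr; ext; simp [hq]

theorem windowCount_eq_two_pow {s t : Fin k} (hp : (p : ℕ) = j + s) (hq : (q : ℕ) = j + t)
    (hj : j + k ≤ N) {b₁ b₂ : Bool} (hb₁ : b₁ = r s) (hb₂ : b₂ = r t) :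
    windowCount r p q b₁ b₂ j = 2 ^ (N - k) := by
  have hps : p = windowEmb j hj s := Fin.ext hp
  have hqt : q = windowEmb j hj t := Fin.ext hq
  have hcard := card_filter_forall_apply_embedding_eq (windowEmb j hj) r
  rw [Fintype.card_bool, Fintype.card_fin, Fintype.card_fin] at hcard
  rw [windowCount]
  convert hcard using 2
  ext y
  simp only [mem_filter, mem_univ, true_and, OccursAt, hps, hqt, hb₁, hb₂, exists_prop_of_true hj]
  grind

theorem windowCount_le_of_right (hq : (q : ℕ) = j + k) (b₁ b₂ : Bool) :
    windowCount r p q b₁ b₂ j ≤ 2 ^ (N - (k + 1)) := by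
  have hj : j + (k + 1) ≤ N := by omega
  have := card_filter_le_of_forall_apply_embedding_eq (windowEmb j hj) (Fin.snoc r b₂)
    (P := fun y => y p = b₁ ∧ y q = b₂ ∧ OccursAt r y j) ?_
  · simpa [windowCount] using this
  rintro y ⟨-, hy, h, hr⟩ s
  refine Fin.lastCases ?_ (fun s => ?_) s
  · simp [← hy]; congr 1; ext; simp [hq]
  · simp only [Fin.snoc_castSucc, ← hr s]; congr 1

theorem windowCount_le_of_left (hp : (p : ℕ) + 1 = j) (hj : j + k ≤ N) (b₁ b₂ : Bool) :
    windowCount r p q b₁ b₂ j ≤ 2 ^ (N - (k + 1)) := by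
  have hpk : p + (k + 1) ≤ N := by omega
  have := card_filter_le_of_forall_apply_embedding_eq (windowEmb p hpk) (Fin.cons b₁ r)
    (P := fun y => y p = b₁ ∧ y q = b₂ ∧ OccursAt r y j) ?_
  · simpa [windowCount] using this
  rintro y ⟨hy, -, h, hr⟩ s
  refine Fin.cases ?_ (fun s => ?_) s
  · simp [← hy]; congr 1
  · simp only [Fin.cons_succ, ← hr s]; congr 1; ext; simp; omega

end Windows

section AdjacentPair

variable {N : ℕ} {r : Fin 3 → Bool} {p q : Fin N}

theorem sum_windowCount_far_eq (hpq : (q : ℕ) = p + 1) (b₁ b₂ c₁ c₂ : Bool) :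
    ∑ j ∈ range (N - 3 + 1) with ¬ (j ≤ (q : ℕ) ∧ (p : ℕ) ≤ j + 2),
        windowCount r p q b₁ b₂ j =
      ∑ j ∈ range (N - 3 + 1) with ¬ (j ≤ (q : ℕ) ∧ (p : ℕ) ≤ j + 2),
        windowCount r p q c₁ c₂ j := by
  refine sum_congr rfl fun j hj => ?_
  rw [mem_filter] at hj
  exact windowCount_eq_of_notMem (fun h => by simp [h] at hpq) (by omega) (by omega) _ _ _ _

theorem sum_windowCount_near_le (hpq : (q : ℕ) = p + 1) {z₁ z₂ : Bool}
    (hz : ¬ ((z₁ = r 0 ∧ z₂ = r 1) ∨ (z₁ = r 1 ∧ z₂ = r 2))) :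
    ∑ j ∈ range (N - 3 + 1) with j ≤ (q : ℕ) ∧ (p : ℕ) ≤ j + 2, windowCount r p q z₁ z₂ j ≤
      2 * 2 ^ (N - 4) := by
  rw [not_or] at hz
  have hle : ∀ j ∈ {j ∈ range (N - 3 + 1) | j ≤ (q : ℕ) ∧ (p : ℕ) ≤ j + 2},
      windowCount r p q z₁ z₂ j ≤
      (if j = p - 2 then 2 ^ (N - 4) else 0) + (if j = q then 2 ^ (N - 4) else 0) := by
    intro j hj
    simp only [mem_filter, mem_range] at hj
    obtain h | h | h | h : j + 2 = p ∨ j + 1 = p ∨ j = p ∨ j = q := by omega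
    · rw [if_pos (by omega)]
      exact (windowCount_le_of_right (by omega) _ _).trans (Nat.le_add_right _ _)
    · rw [windowCount_eq_zero (s := 1) (t := 2) (by simp; omega) (by simp; omega) hz.2]
      exact Nat.zero_le _
    · rw [windowCount_eq_zero (s := 0) (t := 1) (by simp; omega) (by simp; omega) hz.1]
      exact Nat.zero_le _
    · rw [if_pos h]
      exact (windowCount_le_of_left (by omega) (by omega) _ _).trans (Nat.le_add_left _ _)
  refine (sum_le_sum hle).trans ?_
  rw [sum_add_distrib, sum_ite_eq', sum_ite_eq', two_mul]
  gcongr <;> split_ifs <;> simp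

theorem two_pow_le_sum_windowCount_near (hpq : (q : ℕ) = p + 1) (hp : 1 ≤ (p : ℕ))
    (hpN : p + 3 ≤ N) {x₁ x₂ : Bool} (hx : (x₁ = r 0 ∧ x₂ = r 1) ∨ (x₁ = r 1 ∧ x₂ = r 2)) :
    2 ^ (N - 3) ≤
      ∑ j ∈ range (N - 3 + 1) with j ≤ (q : ℕ) ∧ (p : ℕ) ≤ j + 2, windowCount r p q x₁ x₂ j := by
  rcases hx with ⟨hx₁, hx₂⟩ | ⟨hx₁, hx₂⟩
  · rw [← windowCount_eq_two_pow (p := p) (q := q) (j := p) (s := 0) (t := 1) (by simp)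
      (by simp; omega) hpN hx₁ hx₂]
    exact single_le_sum (fun _ _ => Nat.zero_le _) (by simp; omega)
  · rw [← windowCount_eq_two_pow (p := p) (q := q) (j := p - 1) (s := 1) (t := 2)
      (by simp; omega) (by simp; omega) (by omega) hx₁ hx₂]
    exact single_le_sum (fun _ _ => Nat.zero_le _) (by simp; omega)

end AdjacentPair

theorem stmt0 (N : ℕ) (r : Fin 3 → Bool)
    (i : ℕ) (hi1 : 2 ≤ i) (hi2 : i ≤ N - 2)
    (x1 x2 z1 z2 : Bool)
    (hx : (x1 = r 0 ∧ x2 = r 1) ∨ (x1 = r 1 ∧ x2 = r 2))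
    (hz : ¬ ((z1 = r 0 ∧ z2 = r 1) ∨ (z1 = r 1 ∧ z2 = r 2))) :
    duplet r (⟨i - 1, by omega⟩ : Fin N) (⟨i, by omega⟩ : Fin N) z1 z2 ≤
      duplet r (⟨i - 1, by omega⟩ : Fin N) (⟨i, by omega⟩ : Fin N) x1 x2 := by
  set p : Fin N := ⟨i - 1, by omega⟩
  set q : Fin N := ⟨i, by omega⟩
  have hpq : (q : ℕ) = p + 1 := by simp [p, q]; omega
  simp only [duplet_eq_sum_windowCount, ← sum_filter_add_sum_filter_not (range (N - 3 + 1))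
    (fun j => j ≤ (q : ℕ) ∧ (p : ℕ) ≤ j + 2)]
  refine add_le_add ?_ (sum_windowCount_far_eq hpq _ _ _ _).le
  calc _ ≤ 2 * 2 ^ (N - 4) := sum_windowCount_near_le hpq hz
    _ = 2 ^ (N - 3) := by rw [← pow_succ']; congr 1; omega
    _ ≤ _ := two_pow_le_sum_windowCount_near hpq (by simp [p]; omega) (by simp [p]; omega) hx
end

section
/- For every integer N ≥ 1, the number e_N of binary strings of length N that contain at least one occurrence of 001 as a contiguous substring satisfies e_N = Σ_{k=1}^{⌊N/3⌋} (−1)^{k+1} · C(N−2k, k) · 2^{N−3k}, where C(·,·) denotes the binomial coefficient. -/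
/-- The string `001` (with `0 = false`, `1 = true`). -/
def rule001 : Fin 3 → Bool := ![false, false, true]

/-- `eCount N` : the number of binary strings of length `N` containing at least one
occurrence of `001` as a contiguous substring. -/
def eCount (N : ℕ) : ℕ :=
  (Finset.univ.filter fun x : Fin N → Bool => 1 ≤ occCount rule001 x).card

/-!
Split a string by its first letters: `1w` and `01w` avoid `001` iff `w` does, while `00w`
avoids it only for `w = 0…0`. Hence the number `a n` of `001`-avoiding strings satisfies
`a (n+2) = a (n+1) + a n + 1`, so `a n = F (n+3) - 1`. The alternating sum
`S n = ∑ₖ (-1)^k C(n-2k, k) 2^(n-3k)` has generating function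
`1/(1-2x+x³) = 1/((1-x)(1-x-x²))`; Pascal's rule gives `S (n+3) = 2 S (n+2) - S n`, and
`S n = F (n+3) - 1` follows from the initial values. Finally `e N = 2^N - a N = 2^N - S N`.
-/

open Finset

section CountOfFn

variable {α : Type*} [Fintype α]

def countOfFn (p : List α → Prop) [DecidablePred p] (n : ℕ) : ℕ :=
  #{z : Fin n → α | p (List.ofFn z)}

theorem countOfFn_succ (p : List α → Prop) [DecidablePred p] (n : ℕ) :
    countOfFn p (n + 1) = ∑ a, countOfFn (fun l => p (a :: l)) n := by
  simp only [countOfFn, card_filter]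
  rw [← (Fin.consEquiv fun _ => α).sum_comp, Fintype.sum_prod_type]
  simp [Fin.consEquiv]

theorem countOfFn_congr {p q : List α → Prop} [DecidablePred p] [DecidablePred q]
    (h : ∀ l, p l ↔ q l) (n : ℕ) : countOfFn p n = countOfFn q n := by
  simp only [countOfFn, h]

end CountOfFn

theorem occCount_pos_iff {k N : ℕ} (a : Fin k → Bool) (x : Fin N → Bool) :
    0 < occCount a x ↔ List.ofFn a <:+: List.ofFn x := by
  rw [occCount, List.length_pos_iff_exists_mem]
  constructor
  · rintro ⟨i, hi⟩
    have hpre : List.ofFn a <+: (List.ofFn x).drop i :=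
      List.isPrefixOf_iff_prefix.mp (List.mem_filter.mp hi).2
    exact hpre.isInfix.trans (List.drop_suffix i _).isInfix
  · rintro ⟨s, t, hst⟩
    have hlen : s.length + (k + t.length) = N := by
      simpa using congrArg List.length hst
    refine ⟨s.length, List.mem_filter.mpr ⟨List.mem_range.mpr (by omega), ?_⟩⟩
    rw [← hst, List.append_assoc, List.drop_left]
    exact List.isPrefixOf_iff_prefix.mpr (List.prefix_append _ _)

def Avoids001 (l : List Bool) : Prop := ¬ [false, false, true] <:+: l

instance : DecidablePred Avoids001 := fun _ => inferInstanceAs (Decidable (¬ _))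

theorem eCount_add_countOfFn_avoids001 (N : ℕ) : eCount N + countOfFn Avoids001 N = 2 ^ N := by
  have hcompl : countOfFn Avoids001 N = #{x : Fin N → Bool | ¬ 1 ≤ occCount rule001 x} := by
    refine congrArg card (filter_congr fun x _ => ?_)
    rw [Nat.one_le_iff_ne_zero, ← Nat.pos_iff_ne_zero, occCount_pos_iff]
    rfl
  rw [eCount, hcompl, card_filter_add_card_filter_not]
  simp

theorem avoids001_true_cons (l : List Bool) : Avoids001 (true :: l) ↔ Avoids001 l := by
  simp [Avoids001, List.infix_cons_iff]

theorem avoids001_false_true_cons (l : List Bool) :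
    Avoids001 (false :: true :: l) ↔ Avoids001 l := by
  simp [Avoids001, List.infix_cons_iff]

theorem avoids001_false_false_cons (l : List Bool) :
    Avoids001 (false :: false :: l) ↔ ∀ b ∈ l, b = false := by
  induction l with
  | nil => decide
  | cons b l ih =>
    cases b
    · simpa [Avoids001, List.infix_cons_iff] using ih
    · simp [Avoids001, List.infix_cons_iff]

theorem countOfFn_avoids001_false_false (n : ℕ) :
    countOfFn (fun l => Avoids001 (false :: false :: l)) n = 1 := by
  rw [countOfFn, card_eq_one]
  refine ⟨fun _ => false, ?_⟩
  ext z
  simp [avoids001_false_false_cons, List.mem_ofFn, funext_iff]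

theorem countOfFn_avoids001_add_two (n : ℕ) :
    countOfFn Avoids001 (n + 2) = countOfFn Avoids001 (n + 1) + countOfFn Avoids001 n + 1 := by
  rw [countOfFn_succ Avoids001, Fintype.sum_bool, countOfFn_congr avoids001_true_cons,
    countOfFn_succ (fun l => Avoids001 (false :: l)), Fintype.sum_bool,
    countOfFn_congr avoids001_false_true_cons, countOfFn_avoids001_false_false, add_assoc]

theorem countOfFn_avoids001_of_lt_three {n : ℕ} (hn : n < 3) :
    countOfFn Avoids001 n = 2 ^ n := by
  rw [countOfFn, filter_true_of_mem fun z _ h => absurd h.length_le (by simpa)]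
  simp

theorem countOfFn_avoids001_add_one : ∀ n, countOfFn Avoids001 n + 1 = Nat.fib (n + 3)
  | 0 => by rw [countOfFn_avoids001_of_lt_three (by norm_num)]; rfl
  | 1 => by rw [countOfFn_avoids001_of_lt_three (by norm_num)]; rfl
  | n + 2 => by
    have h₀ := countOfFn_avoids001_add_one n
    have h₁ : countOfFn Avoids001 (n + 1) + 1 = Nat.fib (n + 3 + 1) :=
      countOfFn_avoids001_add_one (n + 1)
    rw [countOfFn_avoids001_add_two, show n + 2 + 3 = n + 3 + 2 from rfl, Nat.fib_add_two]
    omega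

def altTerm (n k : ℕ) : ℤ := (-1) ^ k * ((n - 2 * k).choose k : ℤ) * 2 ^ (n - 3 * k)

def altSum (n : ℕ) : ℤ := ∑ k ∈ range (n / 3 + 1), altTerm n k

theorem altTerm_zero (n : ℕ) : altTerm n 0 = 2 ^ n := by
  simp [altTerm]

theorem altTerm_eq_zero {n k : ℕ} (h : n < 3 * k) : altTerm n k = 0 := by
  simp [altTerm, Nat.choose_eq_zero_of_lt (by omega : n - 2 * k < k)]

theorem sum_range_altTerm {n K : ℕ} (h : n / 3 < K) :
    ∑ k ∈ range K, altTerm n k = altSum n :=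
  (sum_subset (range_subset_range.2 h) fun _ _ hk =>
    altTerm_eq_zero (by simp at hk; omega)).symm

theorem altTerm_add_three_succ (m j : ℕ) :
    altTerm (m + 3) (j + 1) = 2 * altTerm (m + 2) (j + 1) - altTerm m j := by
  obtain h | rfl | h := lt_trichotomy m (3 * j)
  · rw [altTerm_eq_zero h, altTerm_eq_zero (by omega), altTerm_eq_zero (by omega)]
    ring
  · simp only [altTerm, show 3 * j + 3 - 2 * (j + 1) = j + 1 by omega,
      show 3 * j + 3 - 3 * (j + 1) = 0 by omega, show 3 * j + 2 - 2 * (j + 1) = j by omega,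
      show 3 * j - 2 * j = j by omega, Nat.sub_self, Nat.choose_self,
      Nat.choose_eq_zero_of_lt j.lt_succ_self]
    push_cast
    ring
  · obtain ⟨r, rfl⟩ : ∃ r, m = 3 * j + r + 1 := ⟨m - 3 * j - 1, by omega⟩
    simp only [altTerm, show 3 * j + r + 1 + 3 - 2 * (j + 1) = (j + r + 1) + 1 by omega,
      show 3 * j + r + 1 + 3 - 3 * (j + 1) = r + 1 by omega,
      show 3 * j + r + 1 + 2 - 2 * (j + 1) = j + r + 1 by omega,
      show 3 * j + r + 1 + 2 - 3 * (j + 1) = r by omega,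
      show 3 * j + r + 1 - 2 * j = j + r + 1 by omega,
      show 3 * j + r + 1 - 3 * j = r + 1 by omega, Nat.choose_succ_succ]
    push_cast
    ring

theorem altSum_add_three (m : ℕ) : altSum (m + 3) = 2 * altSum (m + 2) - altSum m := by
  rw [← sum_range_altTerm (K := m + 4) (by omega), ← sum_range_altTerm (K := m + 4) (by omega),
    ← sum_range_altTerm (K := m + 3) (by omega), sum_range_succ' _ (m + 3),
    sum_range_succ' _ (m + 3)]
  simp only [altTerm_add_three_succ, sum_sub_distrib, ← mul_sum, altTerm_zero]
  ring

theorem altSum_add_one : ∀ n, altSum n + 1 = Nat.fib (n + 3)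
  | 0 => by decide
  | 1 => by decide
  | 2 => by decide
  | n + 3 => by
    have hfib : (Nat.fib (n + 6) : ℤ) = 2 * Nat.fib (n + 5) - Nat.fib (n + 3) := by
      rw [Nat.fib_add_two (n := n + 4), Nat.fib_add_two (n := n + 3)]
      push_cast
      ring
    rw [altSum_add_three]
    linarith [altSum_add_one n, altSum_add_one (n + 2)]

theorem altSum_eq (n : ℕ) :
    altSum n = 2 ^ n - ∑ k ∈ Icc 1 (n / 3),
      (-1 : ℤ) ^ (k + 1) * ((n - 2 * k).choose k : ℤ) * 2 ^ (n - 3 * k) := by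
  rw [altSum, Nat.range_succ_eq_Icc_zero, ← insert_Icc_add_one_left_eq_Icc (Nat.zero_le _),
    sum_insert (by simp), altTerm_zero, sub_eq_add_neg, ← sum_neg_distrib]
  congr 1
  refine sum_congr rfl fun k _ => ?_
  rw [altTerm]
  ring

theorem stmt5_general (N : ℕ) :
    (eCount N : ℤ) =
      ∑ k ∈ Finset.Icc 1 (N / 3),
        (-1 : ℤ) ^ (k + 1) * ((N - 2 * k).choose k : ℤ) * 2 ^ (N - 3 * k) := by
  have hcompl : (eCount N : ℤ) + countOfFn Avoids001 N = 2 ^ N := by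
    exact_mod_cast eCount_add_countOfFn_avoids001 N
  have havoid : (countOfFn Avoids001 N : ℤ) + 1 = Nat.fib (N + 3) := by
    exact_mod_cast countOfFn_avoids001_add_one N
  linarith [altSum_eq N, altSum_add_one N]

theorem stmt5 (N : ℕ) (hN : 1 ≤ N) :
    (eCount N : ℤ) =
      ∑ k ∈ Finset.Icc 1 (N / 3),
        (-1 : ℤ) ^ (k + 1) * ((N - 2 * k).choose k : ℤ) * 2 ^ (N - 3 * k) :=
  stmt5_general N
end

section
/- For every integer N ≥ 3, the number s_N of binary strings of length N that contain exactly one occurrence of 001 as a contiguous substring satisfies the recursion s_{N+1} = 2 s_N − s_{N−2} + 2^{N−2} − e_{N−2}, where e_{N−2} is the number of binary strings of length N−2 containing at least one occurrence of 001 (with e_m = 0 for m ≤ 2). -/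
/-- `sCount N` : the number of binary strings of length `N` containing exactly one
occurrence of `001` as a contiguous substring. -/
def sCount (N : ℕ) : ℕ :=
  (Finset.univ.filter fun x : Fin N → Bool => occCount rule001 x = 1).card

def occL (p l : List Bool) : ℕ :=
  ((List.range (l.length - p.length + 1)).filter (fun i => p.isPrefixOf (l.drop i))).length

lemma occCount_eq {N : ℕ} (x : Fin N → Bool) :
    occCount rule001 x = occL [false, false, true] (List.ofFn x) := by
  simp [occCount, occL, rule001]

lemma isPrefixOf_eq_false {p l : List Bool} (h : l.length < p.length) :
    p.isPrefixOf l = false := by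
  by_contra hc
  have : p.isPrefixOf l = true := by simpa using hc
  have := (List.isPrefixOf_iff_prefix.mp this).length_le
  omega

lemma len_filter_map (g : ℕ → ℕ) (f : ℕ → Bool) (l : List ℕ) :
    ((l.map g).filter f).length = (l.filter (fun i => f (g i))).length := by
  induction l with
  | nil => rfl
  | cons a l ih => simp only [List.map_cons, List.filter_cons]; split <;> simp [ih]

lemma occL_cons (p l : List Bool) (b : Bool) (hp : p.length = 3) :
    occL p (b :: l) = occL p l + (if p.isPrefixOf (b :: l) then 1 else 0) := by
  rcases Nat.lt_or_ge l.length 2 with hl | hl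
  · have h1 : p.isPrefixOf (b :: l) = false := isPrefixOf_eq_false (by simp; omega)
    have h0 : p.isPrefixOf l = false := isPrefixOf_eq_false (by omega)
    simp only [occL, List.length_cons]
    rw [show l.length + 1 - p.length + 1 = 1 from by omega,
        show l.length - p.length + 1 = 1 from by omega]
    simp [List.range_succ, List.filter_cons, h0, h1]
  · obtain ⟨n, hn⟩ : ∃ n, l.length = n + 2 := ⟨l.length - 2, by omega⟩
    have h2 : ∀ i : ℕ, p.isPrefixOf ((b :: l).drop (Nat.succ i)) = p.isPrefixOf (l.drop i) := by
      intro i; rfl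
    have h4 : ((List.map Nat.succ (List.range n)).filter
        (fun i => p.isPrefixOf ((b :: l).drop i))).length
        = ((List.range n).filter (fun i => p.isPrefixOf (l.drop i))).length := by
      rw [len_filter_map]
      simp only [h2]
    have h5 : ((List.range (l.length - p.length + 1)).filter
        (fun i => p.isPrefixOf (l.drop i))).length
        = ((List.range n).filter (fun i => p.isPrefixOf (l.drop i))).length := by
      rcases Nat.eq_or_lt_of_le hl with hl2 | hl2
      · have hn0 : n = 0 := by omega
        have h0 : p.isPrefixOf l = false := isPrefixOf_eq_false (by omega)
        rw [show l.length - p.length + 1 = 1 from by omega]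
        simp [List.range_succ, List.filter_cons, h0, hn0]
      · rw [show l.length - p.length + 1 = n from by omega]
    simp only [occL, List.length_cons]
    rw [show l.length + 1 - p.length + 1 = n + 1 from by omega]
    rw [List.range_succ_eq_map, List.filter_cons]
    split
    · rename_i hcond
      simp only [List.drop_zero] at hcond
      simp [h4, h5, hcond]
    · rename_i hcond
      simp only [List.drop_zero] at hcond
      simp [h4, h5, hcond]

lemma occCount_cons {n : ℕ} (b : Bool) (x : Fin n → Bool) :
    occCount rule001 (Fin.cons b x) =
      occCount rule001 x + (if [false,false,true].isPrefixOf (b :: List.ofFn x) then 1 else 0) := by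
  rw [occCount_eq, occCount_eq, ← occL_cons [false,false,true] (List.ofFn x) b rfl]
  have h : List.ofFn (Fin.cons b x : Fin (n+1) → Bool) = b :: List.ofFn x := by
    rw [List.ofFn_succ]; simp
  rw [h]

lemma occCount_cons_true {n : ℕ} (x : Fin n → Bool) :
    occCount rule001 (Fin.cons true x) = occCount rule001 x := by
  simp [occCount_cons, List.isPrefixOf]

lemma occCount_cons_false {n : ℕ} (x : Fin n → Bool) :
    occCount rule001 (Fin.cons false x) =
      occCount rule001 x + (if [false,true].isPrefixOf (List.ofFn x) then 1 else 0) := by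
  rw [occCount_cons]
  simp [List.isPrefixOf]

lemma card_cons_split {n : ℕ} (P : (Fin (n+1) → Bool) → Prop) [DecidablePred P] :
    (Finset.univ.filter P).card =
      (Finset.univ.filter fun x : Fin n → Bool => P (Fin.cons false x)).card +
      (Finset.univ.filter fun x : Fin n → Bool => P (Fin.cons true x)).card := by
  classical
  rw [Finset.card_filter, Finset.card_filter, Finset.card_filter]
  rw [← Equiv.sum_comp (Fin.consEquiv (fun _ => Bool)) (fun z => if P z then 1 else 0)]
  rw [Fintype.sum_prod_type, Fintype.sum_bool]
  simp only [Fin.consEquiv, Equiv.coe_fn_mk]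
  rw [Nat.add_comm]
  rfl

lemma occ_prepend {m : ℕ} (y : Fin m → Bool) :
    occCount rule001 (Fin.cons false (Fin.cons true y)) = occCount rule001 y := by
  rw [occCount_cons_false, occCount_cons_true]
  have h : ([false,true].isPrefixOf (List.ofFn (Fin.cons true y : Fin (m+1) → Bool))) = false := by
    rw [List.ofFn_succ]; simp [List.isPrefixOf]
  simp [h]

lemma pre_iff {m : ℕ} (x : Fin (m+2) → Bool) :
    [false,true].isPrefixOf (List.ofFn x) = true ↔ (x 0 = false ∧ x (Fin.succ 0) = true) := by
  rw [List.ofFn_succ, List.ofFn_succ]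
  simp [List.isPrefixOf]

lemma decomp {m : ℕ} (x : Fin (m+2) → Bool) (h0 : x 0 = false) (h1 : x (Fin.succ 0) = true) :
    x = Fin.cons false (Fin.cons true (Fin.tail (Fin.tail x))) := by
  conv_lhs => rw [← Fin.cons_self_tail x, ← Fin.cons_self_tail (Fin.tail x)]
  rw [h0, show Fin.tail x 0 = x (Fin.succ 0) from rfl, h1]

lemma card_prepend01 (m c : ℕ) :
    (Finset.univ.filter fun x : Fin (m+2) → Bool =>
        occCount rule001 x = c ∧ [false,true].isPrefixOf (List.ofFn x) = true).card
    = (Finset.univ.filter fun y : Fin m → Bool => occCount rule001 y = c).card := by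
  apply Finset.card_nbij' (fun x => Fin.tail (Fin.tail x))
    (fun y => Fin.cons false (Fin.cons true y))
  · intro x hx
    simp only [Finset.mem_coe, Finset.mem_filter, Finset.mem_univ, true_and] at hx ⊢
    obtain ⟨hocc, hpre⟩ := hx
    obtain ⟨h0, h1⟩ := (pre_iff x).mp hpre
    rw [decomp x h0 h1, occ_prepend] at hocc
    exact hocc
  · intro y hy
    simp only [Finset.mem_coe, Finset.mem_filter, Finset.mem_univ, true_and] at hy ⊢
    refine ⟨by rw [occ_prepend]; exact hy, ?_⟩
    rw [pre_iff]
    simp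
  · intro x hx
    simp only [Finset.mem_coe, Finset.mem_filter, Finset.mem_univ, true_and] at hx
    obtain ⟨h0, h1⟩ := (pre_iff x).mp hx.2
    exact (decomp x h0 h1).symm
  · intro y _
    simp [Fin.tail_cons]

lemma card_occ_zero (k : ℕ) :
    (Finset.univ.filter fun y : Fin k → Bool => occCount rule001 y = 0).card + eCount k = 2 ^ k := by
  have h := Finset.card_filter_add_card_filter_not
    (s := (Finset.univ : Finset (Fin k → Bool)))
    (p := fun y => occCount rule001 y = 0)
  rw [Finset.card_univ, Fintype.card_fun, Fintype.card_fin, Fintype.card_bool] at h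
  rw [eCount]
  have h2 : (Finset.univ.filter fun y : Fin k → Bool => ¬ occCount rule001 y = 0)
      = (Finset.univ.filter fun y : Fin k → Bool => 1 ≤ occCount rule001 y) := by
    apply Finset.filter_congr
    intro y _
    constructor
    · intro h; omega
    · intro h; omega
  rw [h2] at h
  exact h

lemma key (m : ℕ) :
    sCount (m + 4) + sCount (m + 1) + eCount (m + 1) = 2 * sCount (m + 3) + 2 ^ (m + 1) := by
  have hsplit := card_cons_split (n := m + 3) (fun z => occCount rule001 z = 1)
  -- second summand: cons true
  have htrue : (Finset.univ.filter fun x : Fin (m+3) → Bool =>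
      occCount rule001 (Fin.cons true x) = 1).card = sCount (m + 3) := by
    rw [sCount]
    congr 1
    apply Finset.filter_congr
    intro x _
    rw [occCount_cons_true]
  -- first summand: cons false; split by prefix condition
  set pre : (Fin (m+3) → Bool) → Prop :=
    fun x => [false,true].isPrefixOf (List.ofFn x) = true with hpre
  have hfalse : (Finset.univ.filter fun x : Fin (m+3) → Bool =>
        occCount rule001 (Fin.cons false x) = 1).card
      = (Finset.univ.filter fun x : Fin (m+3) → Bool =>
          occCount rule001 x = 0 ∧ pre x).card
        + (Finset.univ.filter fun x : Fin (m+3) → Bool =>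
          occCount rule001 x = 1 ∧ ¬ pre x).card := by
    classical
    rw [← Finset.card_filter_add_card_filter_not
      (s := Finset.univ.filter fun x : Fin (m+3) → Bool =>
        occCount rule001 (Fin.cons false x) = 1) (p := pre)]
    congr 1
    · rw [Finset.filter_filter]
      congr 1
      ext x
      simp only [Finset.mem_filter, Finset.mem_univ, true_and]
      rw [occCount_cons_false]
      constructor
      · rintro ⟨h1, h2⟩
        rw [hpre] at h2
        rw [if_pos h2] at h1
        exact ⟨by omega, h2⟩
      · rintro ⟨h1, h2⟩
        rw [hpre] at h2
        rw [if_pos h2]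
        exact ⟨by omega, h2⟩
    · rw [Finset.filter_filter]
      congr 1
      ext x
      simp only [Finset.mem_filter, Finset.mem_univ, true_and]
      rw [occCount_cons_false]
      constructor
      · rintro ⟨h1, h2⟩
        rw [hpre] at h2
        simp only [h2, if_false, eq_false (h2 : ¬ _)] at h1
        refine ⟨by omega, h2⟩
      · rintro ⟨h1, h2⟩
        have : ¬ ([false,true].isPrefixOf (List.ofFn x) = true) := h2
        rw [if_neg this]
        exact ⟨by omega, h2⟩
  -- identify the two pieces
  have hzero : (Finset.univ.filter fun x : Fin (m+3) → Bool =>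
      occCount rule001 x = 0 ∧ pre x).card
      = (Finset.univ.filter fun y : Fin (m+1) → Bool => occCount rule001 y = 0).card :=
    card_prepend01 (m+1) 0
  have hone : (Finset.univ.filter fun x : Fin (m+3) → Bool =>
      occCount rule001 x = 1 ∧ pre x).card = sCount (m + 1) :=
    card_prepend01 (m+1) 1
  -- split sCount (m+3) by pre
  have hs3 : sCount (m + 3)
      = (Finset.univ.filter fun x : Fin (m+3) → Bool =>
          occCount rule001 x = 1 ∧ pre x).card
        + (Finset.univ.filter fun x : Fin (m+3) → Bool =>
          occCount rule001 x = 1 ∧ ¬ pre x).card := by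
    classical
    rw [sCount, ← Finset.card_filter_add_card_filter_not
      (s := Finset.univ.filter fun x : Fin (m+3) → Bool => occCount rule001 x = 1) (p := pre),
      Finset.filter_filter, Finset.filter_filter]
  have hz := card_occ_zero (m + 1)
  have hS : sCount (m + 4) = (Finset.univ.filter fun x : Fin (m+3) → Bool =>
        occCount rule001 (Fin.cons false x) = 1).card
      + (Finset.univ.filter fun x : Fin (m+3) → Bool =>
        occCount rule001 (Fin.cons true x) = 1).card := by
    rw [sCount]; exact hsplit
  rw [htrue] at hS
  rw [hfalse, hzero] at hS
  omega

theorem stmt6 (N : ℕ) (hN : 3 ≤ N) :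
    (sCount (N + 1) : ℤ) =
      2 * sCount N - sCount (N - 2) + 2 ^ (N - 2) - eCount (N - 2) := by
  obtain ⟨m, rfl⟩ : ∃ m, N = m + 3 := ⟨N - 3, by omega⟩
  have hk := key m
  have h2 : m + 3 - 2 = m + 1 := by omega
  have h3 : m + 3 + 1 = m + 4 := rfl
  rw [h2, h3]
  have hcast := congrArg (Nat.cast : ℕ → ℤ) hk
  push_cast at hcast
  linarith
end

section
/- Let N ≥ 3 and let 2 ≤ L ≤ N−1. The number z_L of binary strings of length N that contain exactly one occurrence of 001 as a contiguous substring and exactly L occurrences of 00 as a contiguous substring satisfies z_L = Σ_{k=1}^{N−2} ( f_{k−L+1} · f_{N−k} + Σ_{ℓ=2}^{L} f_{k−L+ℓ} · f_{N−ℓ−k−1} ). -/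
/-- The string `00` (with `0 = false`). -/
def rule00 : Fin 2 → Bool := ![false, false]

/-- The Fibonacci sequence `f₁ = f₂ = 1`, `f_{m+2} = f_{m+1} + f_m`, extended by
`f_m = 0` for `m ≤ 0`, as a function on `ℤ`. -/
def fibZ (m : ℤ) : ℤ :=
  if m ≤ 0 then 0 else Nat.fib m.toNat

namespace PatternCount

open Finset

section Occurrences

variable {α : Type*} [BEq α]

def occ (w l : List α) : ℕ :=
  #{i ∈ range (l.length - w.length + 1) | w.isPrefixOf (l.drop i)}

theorem card_eq_sum_card_filter_isPrefixOf_drop {S : Finset (List α)} {n : ℕ} {w : List α}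
    (hS : ∀ l ∈ S, l.length = n ∧ occ w l = 1) :
    #S = ∑ i ∈ range (n - w.length + 1), #{l ∈ S | w.isPrefixOf (l.drop i)} := by
  simp only [card_filter]
  rw [sum_comm, card_eq_sum_ones]
  refine sum_congr rfl fun l hl => ?_
  have h := (hS l hl).2
  rw [occ, card_filter, (hS l hl).1] at h
  exact h.symm

variable [LawfulBEq α]

theorem add_length_le_of_isPrefixOf_drop {w l : List α} {i : ℕ} (hw : w ≠ [])
    (h : w.isPrefixOf (l.drop i)) : i + w.length ≤ l.length := by
  have h₁ := (List.isPrefixOf_iff_prefix.1 h).length_le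
  have h₂ := List.length_pos_iff.2 hw
  rw [List.length_drop] at h₁
  omega

theorem eq_take_append_drop_of_isPrefixOf_drop {w l : List α} {i : ℕ}
    (h : w.isPrefixOf (l.drop i)) : l = l.take i ++ w ++ l.drop (i + w.length) := by
  obtain ⟨t, ht⟩ := List.isPrefixOf_iff_prefix.1 h
  have : t = l.drop (i + w.length) := by
    rw [← List.drop_drop, ← ht, List.drop_left]
  rw [← this, List.append_assoc, ht, List.take_append_drop]

theorem occ_eq_card_filter_range {w l : List α} {m : ℕ} (hw : w ≠ [])
    (hm : l.length - w.length < m) :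
    occ w l = #{i ∈ range m | w.isPrefixOf (l.drop i)} := by
  unfold occ
  congr 1
  ext i
  simp only [mem_filter, mem_range, and_congr_left_iff]
  intro h
  have := add_length_le_of_isPrefixOf_drop hw h
  omega

theorem occ_cons {w : List α} (hw : w ≠ []) (a : α) (l : List α) :
    occ w (a :: l) = occ w l + if w.isPrefixOf (a :: l) then 1 else 0 := by
  rw [occ_eq_card_filter_range hw (m := l.length + 2) (by rw [List.length_cons]; omega),
    occ_eq_card_filter_range hw (m := l.length + 1) (by omega), card_filter, card_filter,
    sum_range_succ']
  rfl

theorem occ_nil {w : List α} (hw : w ≠ []) : occ w [] = 0 := by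
  simp [occ, hw]

theorem occ_le_occ_cons {w : List α} (hw : w ≠ []) (a : α) (l : List α) :
    occ w l ≤ occ w (a :: l) := by
  rw [occ_cons hw]
  exact Nat.le_add_right _ _

end Occurrences

theorem occCount_eq_occ {k N : ℕ} (a : Fin k → Bool) (x : Fin N → Bool) :
    occCount a x = occ (List.ofFn a) (List.ofFn x) := by
  rw [occCount, occ, List.length_ofFn, List.length_ofFn, card_def, filter_val, range_val,
    Multiset.range, Multiset.filter_coe, Multiset.coe_card]
  simp only [Bool.decide_eq_true]

def strings (n : ℕ) : Finset (List Bool) :=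
  (univ : Finset (Fin n → Bool)).image List.ofFn

theorem mem_strings {n : ℕ} {l : List Bool} : l ∈ strings n ↔ l.length = n := by
  refine ⟨?_, fun h => mem_image.2 ⟨fun i => l.get (i.cast h.symm), mem_univ _, ?_⟩⟩
  · rintro h
    obtain ⟨x, -, rfl⟩ := mem_image.1 h
    exact List.length_ofFn
  · subst h
    exact List.ofFn_get l

theorem strings_zero : strings 0 = {[]} := by
  ext l
  simp [mem_strings]

theorem strings_succ (n : ℕ) :
    strings (n + 1) = (strings n).image (true :: ·) ∪ (strings n).image (false :: ·) := by
  ext l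
  rcases l with _ | ⟨_ | _, l⟩ <;> simp [mem_strings]

theorem card_filter_strings_succ (P : List Bool → Prop) [DecidablePred P] (n : ℕ) :
    #{l ∈ strings (n + 1) | P l}
      = #{l ∈ strings n | P (true :: l)} + #{l ∈ strings n | P (false :: l)} := by
  rw [strings_succ, filter_union, card_union_of_disjoint, filter_image, filter_image,
    card_image_of_injective _ List.cons_injective, card_image_of_injective _ List.cons_injective]
  simp [disjoint_left]

theorem card_filter_strings_add_two (P : List Bool → Prop) [DecidablePred P] (n : ℕ) :
    #{l ∈ strings (n + 2) | P l} = #{l ∈ strings (n + 1) | P (true :: l)}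
      + #{l ∈ strings n | P (false :: true :: l)} + #{l ∈ strings n | P (false :: false :: l)} := by
  rw [card_filter_strings_succ, card_filter_strings_succ (fun l => P (false :: l)), add_assoc]

theorem occ_true_cons (w l : List Bool) : occ (false :: w) (true :: l) = occ (false :: w) l := by
  simp [occ_cons]

theorem occ_false_true_cons (w l : List Bool) :
    occ (false :: false :: w) (false :: true :: l) = occ (false :: false :: w) l := by
  simp [occ_cons]

theorem occ00_append_true_cons (x y : List Bool) :
    occ [false, false] (x ++ true :: y) = occ [false, false] x + occ [false, false] y := by
  induction x with
  | nil => simp [occ_cons, occ_nil]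
  | cons a x ih =>
    rw [List.cons_append, occ_cons (by simp), occ_cons (by simp), ih]
    rcases x with _ | ⟨b, x⟩ <;> simp [List.isPrefixOf_cons_cons]
    omega

theorem occ001_append_00_append_true_cons (u y : List Bool) :
    occ [false, false, true] (u ++ [false, false] ++ true :: y)
      = occ [false, false, true] (u ++ [false, false]) + occ [false, false, true] y + 1 := by
  induction u with
  | nil => simp [occ_cons, occ_nil]
  | cons a u ih =>
    rw [List.cons_append, List.cons_append, occ_cons (by simp), occ_cons (by simp), ih]
    rcases u with _ | ⟨b, _ | ⟨c, u⟩⟩ <;> simp [List.isPrefixOf_cons_cons]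
    omega

theorem occ00_append_00_ne_zero (u : List Bool) : occ [false, false] (u ++ [false, false]) ≠ 0 := by
  induction u with
  | nil => simp [occ_cons]
  | cons a u ih =>
    rw [List.cons_append, occ_cons (by simp)]
    omega

theorem exists_eq_append_00 {l : List Bool} (h₁ : occ [false, false, true] l = 0)
    (h₂ : occ [false, false] l ≠ 0) : ∃ u, l = u ++ [false, false] := by
  induction l with
  | nil => simp [occ_nil] at h₂
  | cons a t ih =>
    by_cases ht : occ [false, false] t = 0
    -- then `l` starts with `00`, which can be followed neither by `0` (by `ht`) nor by `1`
    · rcases t with _ | ⟨_ | _, _ | ⟨_ | _, t⟩⟩ <;> cases a <;> simp_all [occ_cons, occ_nil]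
    · obtain ⟨u, rfl⟩ := ih (Nat.eq_zero_of_le_zero (h₁ ▸ occ_le_occ_cons (by simp) a t)) ht
      exact ⟨a :: u, rfl⟩

theorem eq_replicate_of_occ001_00_cons {t : List Bool}
    (h : occ [false, false, true] (false :: false :: t) = 0) :
    t = List.replicate t.length false := by
  induction t with
  | nil => rfl
  | cons a t ih =>
    cases a
    · have := occ_le_occ_cons (w := [false, false, true]) (by simp) false (false :: false :: t)
      rw [List.length_cons, List.replicate_succ, ← ih (by omega)]
    · simp [occ_cons] at h

theorem occ001_replicate_false (n : ℕ) : occ [false, false, true] (List.replicate n false) = 0 := by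
  induction n with
  | zero => simp [occ_nil]
  | succ n ih =>
    rw [List.replicate_succ, occ_cons (by simp), ih, if_neg]
    exact fun h => by simpa using (List.isPrefixOf_iff_prefix.1 h).subset (by simp : true ∈ _)

theorem occ00_replicate_false (n : ℕ) : occ [false, false] (List.replicate (n + 1) false) = n := by
  induction n with
  | zero => simp [occ_cons, occ_nil]
  | succ n ih =>
    rw [List.replicate_succ, occ_cons (by simp), ih]
    simp [List.replicate_succ]

theorem card_filter_00_cons (n j : ℕ) :
    #{t ∈ strings n | occ [false, false, true] (false :: false :: t) = 0
        ∧ occ [false, false] (false :: false :: t) = j} = if j = n + 1 then 1 else 0 := by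
  have h : ∀ t ∈ strings n, (occ [false, false, true] (false :: false :: t) = 0
      ∧ occ [false, false] (false :: false :: t) = j) ↔ t = List.replicate n false ∧ j = n + 1 := by
    intro t ht
    rw [mem_strings] at ht
    constructor
    · rintro ⟨h₁, rfl⟩
      obtain rfl := ht ▸ eq_replicate_of_occ001_00_cons h₁
      simp [← List.replicate_succ, occ00_replicate_false]
    · rintro ⟨rfl, rfl⟩
      simp only [← List.replicate_succ, occ001_replicate_false, occ00_replicate_false, and_self]
  rw [filter_congr h]
  split_ifs with hj
  · simp [hj, filter_eq', mem_strings]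
  · simp [hj]

open Nat in
theorem card_occ001_eq_zero_occ00_eq (n j : ℕ) :
    #{l ∈ strings n | occ [false, false, true] l = 0 ∧ occ [false, false] l = j}
      = if j = 0 then fib (n + 2) else fib (n - j) := by
  induction n using Nat.twoStepInduction with
  | zero => rcases j with _ | j <;> simp [strings_zero, filter_singleton, occ_nil]
  | one =>
    rw [card_filter_strings_succ]
    rcases j with _ | j <;> simp [strings_zero, filter_singleton, occ_cons, occ_nil, fib_add_two]
  | more n ih₀ ih₁ =>
    rw [card_filter_strings_add_two, card_filter_00_cons]
    simp only [occ_true_cons, occ_false_true_cons, ih₀, ih₁]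
    obtain rfl | hj := eq_or_ne j 0
    · simp only [↓reduceIte, fib_add_two, Nat.right_eq_add, Nat.add_eq_zero_iff, one_ne_zero,
        and_false, add_zero]
      omega
    simp only [hj, if_false]
    rcases lt_trichotomy j (n + 1) with h | rfl | h
    · rw [if_neg h.ne, show n + 2 - j = n - j + 2 by omega, show n + 1 - j = n - j + 1 by omega,
        fib_add_two, add_zero, add_comm]
    · simp
    · rw [if_neg h.ne', show n + 2 - j = 0 by omega, show n + 1 - j = 0 by omega,
        show n - j = 0 by omega, fib_zero]

theorem card_filter_isPrefixOf_drop_eq_card_pairs (N L i : ℕ) (hi : i + 3 ≤ N) :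
    #{l ∈ {l ∈ strings N | occ [false, false, true] l = 1 ∧ occ [false, false] l = L} |
        [false, false, true].isPrefixOf (l.drop i)}
      = #{x ∈ {p ∈ strings (i + 2) | occ [false, false, true] p = 0 ∧ occ [false, false] p ≠ 0}
          ×ˢ {s ∈ strings (N - i - 3) | occ [false, false, true] s = 0} |
          occ [false, false] x.1 + occ [false, false] x.2 = L} := by
  symm
  apply card_nbij (fun x => x.1 ++ true :: x.2)
  · rintro ⟨p, s⟩ hx
    simp only [mem_coe, mem_product, mem_filter, mem_strings] at hx ⊢
    obtain ⟨⟨⟨hp, hp₁, hp₂⟩, hs, hs₁⟩, hL⟩ := hx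
    obtain ⟨u, rfl⟩ := exists_eq_append_00 hp₁ hp₂
    simp only [List.length_append, List.length_cons, List.length_nil] at hp
    refine ⟨⟨by simp only [List.length_append, List.length_cons, List.length_nil]; omega,
      by rw [occ001_append_00_append_true_cons]; omega,
      by rw [occ00_append_true_cons]; omega⟩, ?_⟩
    rw [List.append_assoc, List.drop_left' (by omega)]
    simp
  · rintro ⟨p, s⟩ hx ⟨p', s'⟩ hx' h
    simp only [mem_coe, mem_product, mem_filter, mem_strings] at hx hx'
    obtain ⟨rfl, h'⟩ := List.append_inj h (by rw [hx.1.1.1, hx'.1.1.1])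
    exact Prod.ext rfl (List.cons.inj h').2
  · intro l hl
    simp only [mem_coe, mem_filter, mem_strings] at hl
    obtain ⟨⟨hN, h₁, hL⟩, hpre⟩ := hl
    have hl : l = l.take i ++ [false, false] ++ true :: l.drop (i + 3) := by
      simpa using eq_take_append_drop_of_isPrefixOf_drop hpre
    rw [hl, occ001_append_00_append_true_cons] at h₁
    rw [hl, occ00_append_true_cons] at hL
    refine ⟨(l.take i ++ [false, false], l.drop (i + 3)), ?_, hl.symm⟩
    simp only [mem_coe, mem_product, mem_filter, mem_strings]
    refine ⟨⟨⟨?_, by omega, occ00_append_00_ne_zero _⟩, ?_, by omega⟩, hL⟩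
    · rw [List.length_append, List.length_take, hN]
      simp only [List.length_cons, List.length_nil]
      omega
    · rw [List.length_drop, hN]
      omega

theorem card_filter_product_add_eq {α β : Type*} (s : Finset α) (t : Finset β) (f : α → ℕ)
    (g : β → ℕ) (n : ℕ) :
    #{x ∈ s ×ˢ t | f x.1 + g x.2 = n}
      = ∑ ij ∈ antidiagonal n, #{a ∈ s | f a = ij.1} * #{b ∈ t | g b = ij.2} := by
  rw [card_eq_sum_card_fiberwise (f := fun x => (f x.1, g x.2)) (t := antidiagonal n)
    fun x hx => by simpa using (mem_filter.1 hx).2]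
  refine sum_congr rfl fun ⟨j, m⟩ hij => ?_
  rw [← card_product]
  congr 1
  ext ⟨a, b⟩
  rw [HasAntidiagonal.mem_antidiagonal] at hij
  simp only [mem_filter, mem_product, Prod.ext_iff]
  constructor
  · rintro ⟨⟨⟨ha, hb⟩, -⟩, rfl, rfl⟩
    exact ⟨⟨ha, rfl⟩, hb, rfl⟩
  · rintro ⟨⟨ha, rfl⟩, hb, rfl⟩
    exact ⟨⟨⟨ha, hb⟩, hij⟩, rfl, rfl⟩

theorem sum_antidiagonal_eq_add_sum_Icc {M : Type*} [AddCommMonoid M] (F : ℕ × ℕ → M) {L : ℕ}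
    (hL : 1 ≤ L) (hF : F (0, L) = 0) :
    ∑ p ∈ antidiagonal L, F p = F (L, 0) + ∑ l ∈ Icc 2 L, F (L + 1 - l, l - 1) := by
  rw [← Nat.sum_antidiagonal_swap, Nat.sum_antidiagonal_eq_sum_range_succ_mk, range_eq_Ico,
    sum_Ico_succ_top (Nat.zero_le L), sum_eq_sum_Ico_succ_bot hL]
  simp only [Prod.swap_prod_mk, Nat.sub_self, Nat.sub_zero, hF, add_zero]
  rw [← Ico_add_one_right_eq_Icc, show (2 : ℕ) = 1 + 1 from rfl, ← sum_Ico_add']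
  simp

open Nat in
theorem card_filter_isPrefixOf_drop_eq_fib {N L i : ℕ} (hL : 1 ≤ L) (hi : i + 3 ≤ N) :
    #{l ∈ {l ∈ strings N | occ [false, false, true] l = 1 ∧ occ [false, false] l = L} |
        [false, false, true].isPrefixOf (l.drop i)}
      = fib (i + 2 - L) * fib (N - i - 1)
        + ∑ l ∈ Icc 2 L, fib (i + 1 + l - L) * fib (N - l - i - 2) := by
  have hp (j : ℕ) : #{p ∈ strings (i + 2) | (occ [false, false, true] p = 0
      ∧ occ [false, false] p ≠ 0) ∧ occ [false, false] p = j}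
        = if j = 0 then 0 else fib (i + 2 - j) := by
    split_ifs with hj
    · simp [hj]
    · rw [← (card_occ001_eq_zero_occ00_eq (i + 2) j).trans (if_neg hj)]
      congr 1
      exact filter_congr fun p _ => ⟨fun h => ⟨h.1.1, h.2⟩, fun h => ⟨⟨h.1, h.2 ▸ hj⟩, h.2⟩⟩
  rw [card_filter_isPrefixOf_drop_eq_card_pairs N L i hi, card_filter_product_add_eq]
  simp only [filter_filter, hp, card_occ001_eq_zero_occ00_eq]
  rw [sum_antidiagonal_eq_add_sum_Icc _ hL (by simp), if_neg (by omega), if_pos rfl,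
    show N - i - 3 + 2 = N - i - 1 by omega]
  refine congrArg _ (sum_congr rfl fun l hl => ?_)
  rw [mem_Icc] at hl
  rw [if_neg (by omega), if_neg (by omega)]
  congr 2 <;> omega

theorem fibZ_eq_fib_toNat (m : ℤ) : fibZ m = Nat.fib m.toNat := by
  unfold fibZ
  split_ifs with h
  · simp [Int.toNat_of_nonpos h]
  · rfl

theorem card_filter_occCount_eq (N L : ℕ) :
    #{x : Fin N → Bool | occCount rule001 x = 1 ∧ occCount rule00 x = L}
      = #{l ∈ strings N | occ [false, false, true] l = 1 ∧ occ [false, false] l = L} := by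
  rw [strings, filter_image, card_image_of_injective _ List.ofFn_injective]
  simp only [occCount_eq_occ]
  rfl

end PatternCount

open PatternCount Finset in
theorem stmt9_general (N L : ℕ) (hN : 3 ≤ N) (hL2 : 2 ≤ L) :
    ((Finset.univ.filter fun x : Fin N → Bool =>
        occCount rule001 x = 1 ∧ occCount rule00 x = L).card : ℤ)
      = ∑ k ∈ Finset.Icc 1 (N - 2),
          (fibZ ((k : ℤ) - L + 1) * fibZ ((N : ℤ) - k)
            + ∑ l ∈ Finset.Icc 2 L, fibZ ((k : ℤ) - L + l) * fibZ ((N : ℤ) - l - k - 1)) := by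
  rw [card_filter_occCount_eq, card_eq_sum_card_filter_isPrefixOf_drop (n := N) fun l hl => by
      simp only [mem_filter, mem_strings] at hl; exact ⟨hl.1, hl.2.1⟩,
    Nat.cast_sum, ← Ico_add_one_right_eq_Icc, sum_Ico_eq_sum_range,
    show N - 2 + 1 - 1 = N - 3 + 1 by omega]
  refine sum_congr rfl fun i hi => ?_
  rw [mem_range] at hi
  rw [card_filter_isPrefixOf_drop_eq_fib (by omega) (by omega)]
  push_cast
  simp only [fibZ_eq_fib_toNat]
  refine congrArg₂ (· + ·) ?_ (sum_congr rfl fun l hl => ?_)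
  · congr 3 <;> omega
  · rw [mem_Icc] at hl
    congr 3 <;> omega

theorem stmt9 (N L : ℕ) (hN : 3 ≤ N) (hL2 : 2 ≤ L) (hLN : L ≤ N - 1) :
    ((Finset.univ.filter fun x : Fin N → Bool =>
        occCount rule001 x = 1 ∧ occCount rule00 x = L).card : ℤ)
      = ∑ k ∈ Finset.Icc 1 (N - 2),
          (fibZ ((k : ℤ) - L + 1) * fibZ ((N : ℤ) - k)
            + ∑ l ∈ Finset.Icc 2 L, fibZ ((k : ℤ) - L + l) * fibZ ((N : ℤ) - l - k - 1)) :=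
  stmt9_general N L hN hL2
end

section
/- Let k ≥ 1 and let a, b ∈ {0,1}^k with a ≠ b. For every d ≥ 0 there exists an integer N ≥ k such that ‖F_N(a) − F_N(b)‖₂ ≥ d. -/
section
variable {α : Type*} [BEq α]

def infixCount (p l : List α) : ℕ :=
  ((List.range (l.length - p.length + 1)).filter (fun i => p.isPrefixOf (l.drop i))).length

theorem infixCount_cons {p l : List α} (h : p.length ≤ l.length) (c : α) :
    infixCount p (c :: l) = (p.isPrefixOf (c :: l)).toNat + infixCount p l := by
  rw [infixCount, List.length_cons, show l.length + 1 - p.length + 1 = l.length - p.length + 1 + 1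
    by omega, List.range_succ_eq_map, List.filter_cons, List.filter_map]
  cases hp : p.isPrefixOf (c :: l) <;> simp [infixCount, hp, Function.comp_def, add_comm]

variable [LawfulBEq α]

theorem infixCount_sub_lt {c c' : α} (hc : c ≠ c') {t p L : List α} (hp : p ≠ c :: t)
    (hlen : p.length = t.length + 1) (ht : t <+: L) (hL : t.length < L.length) :
    (infixCount (c :: t) (c' :: L) : ℤ) - infixCount p (c' :: L)
      < infixCount (c :: t) (c :: L) - infixCount p (c :: L) := by
  have hct : (c :: t) <+: (c :: L) := List.cons_prefix_cons.mpr ⟨rfl, ht⟩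
  have hpL : ¬ p <+: (c :: L) := fun h =>
    hp ((List.prefix_of_prefix_length_le h hct (by simp [hlen])).eq_of_length (by simp [hlen]))
  have hct' : ¬ (c :: t) <+: (c' :: L) := fun h => hc (List.cons_prefix_cons.mp h).1
  simp only [infixCount_cons (p := c :: t) (l := L) (by simpa using hL),
    infixCount_cons (p := p) (l := L) (by omega)]
  rw [← List.isPrefixOf_iff_prefix] at hct hpL hct'
  simp only [hct, hpL, hct', Bool.toNat_true, Bool.toNat_false]
  push_cast
  have := Bool.toNat_le (p.isPrefixOf (c' :: L))
  omega

end

theorem occCount_eq_infixCount {k N : ℕ} (a : Fin k → Bool) (x : Fin N → Bool) :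
    occCount a x = infixCount (List.ofFn a) (List.ofFn x) := by
  simp [occCount, infixCount]

theorem occCount_sub_lt_of_update_zero {k r : ℕ} (hr : 0 < r) {a b : Fin (k + 1) → Bool}
    (hab : a ≠ b) (z : Fin r → Bool) :
    (occCount a (Fin.append (Function.update a 0 (!a 0)) z) : ℤ)
        - occCount b (Fin.append (Function.update a 0 (!a 0)) z)
      < occCount a (Fin.append a z) - occCount b (Fin.append a z) := by
  simp only [occCount_eq_infixCount, List.ofFn_fin_append]
  rw [List.ofFn_succ (f := Function.update a 0 _), List.ofFn_succ (f := a)]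
  simp only [Function.update_self, ne_eq, Fin.succ_ne_zero, not_false_eq_true,
    Function.update_of_ne, List.cons_append]
  refine infixCount_sub_lt (by simp) ?_ (by simp) (List.prefix_append _ _) (by simpa using hr)
  rw [← List.ofFn_succ]
  exact fun h => hab (List.ofFn_injective h).symm

theorem one_le_sq_add_sq_of_ne {m n : ℤ} (h : m ≠ n) : (1 : ℝ) ≤ (m : ℝ) ^ 2 + (n : ℝ) ^ 2 := by
  have hpos : 0 < m ^ 2 + n ^ 2 := by
    rcases eq_or_ne m 0 with rfl | hm
    · simpa [sq_pos_iff] using h.symm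
    · exact add_pos_of_pos_of_nonneg (sq_pos_iff.mpr hm) (sq_nonneg n)
  exact_mod_cast (Int.add_one_le_of_lt hpos : 0 + 1 ≤ m ^ 2 + n ^ 2)

theorem two_pow_le_sum_sq_sub_occCount {k r : ℕ} (hr : 0 < r) {a b : Fin (k + 1) → Bool}
    (hab : a ≠ b) :
    (2 : ℝ) ^ r ≤ ∑ y : Fin (k + 1 + r) → Bool, ((occCount a y : ℝ) - occCount b y) ^ 2 := by
  set D : (Fin (k + 1 + r) → Bool) → ℝ := fun y => (occCount a y : ℝ) - occCount b y
  set a' := Function.update a 0 (!a 0)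
  have ha' : a' ≠ a := fun h => by simpa [a'] using congrFun h 0
  calc (2 : ℝ) ^ r = ∑ z : Fin r → Bool, 1 := by simp
    _ ≤ ∑ z : Fin r → Bool, ∑ u ∈ {a', a}, D (Fin.append u z) ^ 2 := by
      gcongr with z
      rw [Finset.sum_pair ha']
      have h := one_le_sq_add_sq_of_ne (occCount_sub_lt_of_update_zero hr hab z).ne
      push_cast at h
      exact h
    _ ≤ ∑ z : Fin r → Bool, ∑ u, D (Fin.append u z) ^ 2 := by
      gcongr
      exact Finset.subset_univ _
    _ = ∑ y, D y ^ 2 := by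
      rw [← Fintype.sum_prod_type_right (f := fun p => D (Fin.append p.1 p.2) ^ 2)]
      exact Fintype.sum_equiv (Fin.appendEquiv _ _) _ _ fun _ => rfl

theorem stmt17_general (k : ℕ) (a b : Fin k → Bool) (hab : a ≠ b)
    (d : ℝ) :
    ∃ N : ℕ, k ≤ N ∧
      d ≤ Real.sqrt (∑ x : Fin N → Bool, ((occCount a x : ℝ) - (occCount b x : ℝ)) ^ 2) := by
  obtain ⟨k, rfl⟩ : ∃ k', k = k' + 1 :=
    Nat.exists_eq_succ_of_ne_zero fun hk => hab (by subst hk; exact Subsingleton.elim a b)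
  obtain ⟨r, hr⟩ := pow_unbounded_of_one_lt (d ^ 2) one_lt_two
  refine ⟨k + 1 + (r + 1), by omega, (le_abs_self d).trans (Real.abs_le_sqrt ?_)⟩
  calc d ^ 2 ≤ 2 ^ (r + 1) := hr.le.trans (pow_le_pow_right₀ one_le_two r.le_succ)
    _ ≤ _ := two_pow_le_sum_sq_sub_occCount r.succ_pos hab

theorem stmt17 (k : ℕ) (hk : 1 ≤ k) (a b : Fin k → Bool) (hab : a ≠ b)
    (d : ℝ) (hd : 0 ≤ d) :
    ∃ N : ℕ, k ≤ N ∧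
      d ≤ Real.sqrt (∑ x : Fin N → Bool, ((occCount a x : ℝ) - (occCount b x : ℝ)) ^ 2) :=
  stmt17_general k a b hab d
end

section
/- Let k ≥ 1 and let a, b ∈ {0,1}^k with a ≠ b. Let δ ∈ [0, 1), and suppose that for each integer N ≥ k there is a linear map Φ_N : ℝ^{2^N} → ℝ^{M_N} satisfying the restricted-isometry-type lower bound (1 − δ)‖v‖₂ ≤ ‖Φ_N(v)‖₂ for the vector v = F_N(a) − F_N(b) (viewing the transforms as vectors in ℝ^{2^N} indexed by {0,1}^N). Then for every D ≥ 0 there exists N ≥ k such that ‖Φ_N(F_N(a)) − Φ_N(F_N(b))‖₂ ≥ D. -/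
/-- The transform `F_N(a)` viewed as a vector of `ℝ^{2^N}`, i.e. an element of the
Euclidean space indexed by the binary strings of length `N`. -/
def transformVec (k N : ℕ) (a : Fin k → Bool) : EuclideanSpace ℝ (Fin N → Bool) :=
  WithLp.toLp 2 (fun x => (occCount a x : ℝ))

/-!
Fix the first `k` letters of `x` to be `a` and let the remaining `m` letters `y` vary. Summed
over `y`, occurrences of `a` and of `b` at a position `i ≥ k` are equinumerous (the window lies
inside `y`); at position `0` every word contains `a` and none contains `b`; at `0 < i < k` at
most `2 ^ (m - i)` words contain `b`. Hence
`∑ y, (F(a) - F(b)) (a ++ y) ≥ 2 ^ m - ∑ 0 < i < k, 2 ^ (m - i) = 2 ^ (m + 1 - k)`.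
Since `F(a) - F(b)` is integer valued, its squared norm dominates this sum, so
`‖F_N(a) - F_N(b)‖` is unbounded in `N`, and the lower bound on `Φ_N` transfers this to
`‖Φ_N (F_N(a) - F_N(b))‖`.
-/

open Finset

theorem card_filter_forall_mem_eq {ι β : Type*} [Fintype ι] [DecidableEq ι] [Fintype β]
    [DecidableEq β] (s : Finset ι) (f : ι → β) :
    #{y : ι → β | ∀ p ∈ s, y p = f p} = Fintype.card β ^ (Fintype.card ι - #s) := by
  have : ({y : ι → β | ∀ p ∈ s, y p = f p} : Finset _) =
      Fintype.piFinset fun p => if p ∈ s then {f p} else univ := by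
    ext y
    simp only [mem_filter, mem_univ, true_and, Fintype.mem_piFinset]
    refine forall_congr' fun p => ?_
    split_ifs <;> simp [*]
  rw [this, Fintype.card_piFinset, ← card_compl]
  simp [apply_ite card, prod_ite, filter_not, compl_eq_univ_sdiff]

theorem Fin.append_right_injective {α : Type*} {k m : ℕ} (a : Fin k → α) :
    Function.Injective (Fin.append a : (Fin m → α) → Fin (k + m) → α) := fun y z h =>
  funext fun j => by simpa using congrFun h (Fin.natAdd k j)

theorem sum_comp_le_sum_sq {α β : Type*} [Fintype α] [Fintype β] [DecidableEq β] (f : β → ℤ)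
    {e : α → β} (he : Function.Injective e) : ∑ y, f (e y) ≤ ∑ x, f x ^ 2 := by
  rw [← sum_image fun y _ z _ h => he h]
  exact (sum_le_sum fun x _ => Int.le_self_sq (f x)).trans
    (sum_le_sum_of_subset_of_nonneg (subset_univ _) fun x _ _ => sq_nonneg (f x))

theorem two_pow_le_sum_range {k m : ℕ} {d : ℕ → ℤ} (h0 : 2 ^ m ≤ d 0)
    (hmid : ∀ i, 0 < i → i < k → i ≤ m → -2 ^ (m - i) ≤ d i)
    (htail : ∀ i, k ≤ i → i ≤ m → 0 ≤ d i) :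
    ∀ i ≤ m, 2 ^ (m - min i (k - 1)) ≤ ∑ j ∈ range (i + 1), d j := by
  intro i hi
  induction i with
  | zero => simpa using h0
  | succ i ih =>
    rw [sum_range_succ]
    have hprev := ih (by omega)
    by_cases hik : i + 1 < k
    · have hd := hmid (i + 1) (by omega) hik hi
      rw [show min i (k - 1) = i by omega, show m - i = m - (i + 1) + 1 by omega,
        pow_succ] at hprev
      rw [show min (i + 1) (k - 1) = i + 1 by omega]
      linarith
    · have hd := htail (i + 1) (by omega) hi
      rw [show min (i + 1) (k - 1) = min i (k - 1) by omega]
      linarith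

theorem isPrefixOf_drop_ofFn_iff {k N : ℕ} (c : Fin k → Bool) (x : Fin N → Bool) {i : ℕ}
    (hi : i + k ≤ N) :
    (List.ofFn c).isPrefixOf ((List.ofFn x).drop i) ↔
      ∀ q : Fin N, i ≤ q → q < i + k → (List.ofFn c)[q - i]? = some (x q) := by
  simp only [List.isPrefixOf_iff_prefix, List.prefix_iff_getElem?, List.getElem?_drop,
    List.length_ofFn, List.getElem_ofFn, List.getElem?_ofFn]
  constructor
  · intro h q hiq hqk
    have := h (q - i) (by omega)
    simp only [Nat.add_sub_cancel' hiq, dif_pos q.isLt] at this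
    simp [dif_pos (show (q : ℕ) - i < k by omega), ← this]
  · intro h j hj
    simpa [dif_pos hj, dif_pos (show i + j < N by omega)] using
      (h ⟨i + j, by omega⟩ (by simp) (by simp; omega)).symm

theorem isPrefixOf_drop_ofFn_append_iff {k m : ℕ} (a c : Fin k → Bool) (y : Fin m → Bool)
    {i : ℕ} (hi : i ≤ m) :
    (List.ofFn c).isPrefixOf ((List.ofFn (Fin.append a y)).drop i) ↔
      (∀ p : Fin k, i ≤ p → (List.ofFn c)[p - i]? = some (a p)) ∧
      ∀ p : Fin m, i ≤ k + p → p < i → (List.ofFn c)[k + p - i]? = some (y p) := by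
  rw [isPrefixOf_drop_ofFn_iff c _ (by omega), Fin.forall_fin_add]
  simp only [Fin.append_left, Fin.append_right, Fin.val_castAdd, Fin.val_natAdd]
  refine and_congr (forall_congr' fun p => ?_) (forall_congr' fun p => ?_)
  · exact ⟨fun h hp => h hp (by omega), fun h hp _ => h hp⟩
  · exact ⟨fun h hp hpi => h hp (by omega), fun h hp hpi => h hp (by omega)⟩

theorem occCount_eq_card_filter {k N : ℕ} (c : Fin k → Bool) (x : Fin N → Bool) :
    occCount c x = #{i ∈ range (N - k + 1) | (List.ofFn c).isPrefixOf ((List.ofFn x).drop i)} := by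
  simp only [occCount, Finset.card, Finset.filter, Finset.range, Multiset.range,
    Multiset.filter_coe, Multiset.coe_card, Bool.decide_eq_true]

def appendOccCount {k : ℕ} (a c : Fin k → Bool) (m i : ℕ) : ℕ :=
  #{y : Fin m → Bool | (List.ofFn c).isPrefixOf ((List.ofFn (Fin.append a y)).drop i)}

/-- The positions of `y` read by the length-`k` window starting at position `i` of
`Fin.append a y`. -/
def windowOverlap (k m i : ℕ) : Finset (Fin m) := {p : Fin m | i ≤ k + p ∧ p < i}

theorem appendOccCount_eq {k m : ℕ} (a c : Fin k → Bool) {i : ℕ} (hi : i ≤ m) :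
    appendOccCount a c m i =
      if ∀ p : Fin k, i ≤ p → (List.ofFn c)[p - i]? = some (a p) then
        2 ^ (m - #(windowOverlap k m i)) else 0 := by
  unfold appendOccCount
  simp_rw [isPrefixOf_drop_ofFn_append_iff a c _ hi]
  split_ifs with ha
  · have hcount := card_filter_forall_mem_eq (windowOverlap k m i)
      fun p => ((List.ofFn c)[k + p - i]?).getD false
    rw [Fintype.card_bool, Fintype.card_fin] at hcount
    rw [← hcount]
    congr 1
    ext y
    simp only [windowOverlap, mem_filter, mem_univ, true_and, and_imp, and_iff_right ha]
    refine forall_congr' fun p => forall₂_congr fun hp hpi => ?_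
    rw [List.getElem?_ofFn, dif_pos (by omega)]
    simp [eq_comm]
  · rw [filter_false_of_mem fun y _ h => ha h.1, card_empty]

theorem card_windowOverlap {k m i : ℕ} (hik : i ≤ k) (him : i ≤ m) :
    #(windowOverlap k m i) = i := by
  rw [← card_map Fin.valEmbedding]
  convert card_range i using 2
  ext p
  simp only [windowOverlap, mem_map, mem_filter, mem_univ, true_and, Fin.valEmbedding_apply,
    mem_range]
  exact ⟨fun ⟨q, hq, hqp⟩ => hqp ▸ hq.2, fun hp => ⟨⟨p, by omega⟩, ⟨by simp; omega, hp⟩, rfl⟩⟩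

theorem appendOccCount_zero {k : ℕ} (a c : Fin k → Bool) (m : ℕ) :
    appendOccCount a c m 0 = if c = a then 2 ^ m else 0 := by
  rw [appendOccCount_eq a c (Nat.zero_le m)]
  have hempty : windowOverlap k m 0 = ∅ := by
    ext p
    simp [windowOverlap]
  have hagree : (∀ p : Fin k, 0 ≤ (p : ℕ) → (List.ofFn c)[(p : ℕ)]? = some (a p)) ↔ c = a := by
    simp [funext_iff, Fin.forall_iff]
  simp only [hempty, card_empty, Nat.sub_zero, hagree]

theorem appendOccCount_le {k m : ℕ} (a c : Fin k → Bool) {i : ℕ} (hik : i ≤ k) (him : i ≤ m) :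
    appendOccCount a c m i ≤ 2 ^ (m - i) := by
  rw [appendOccCount_eq a c him, card_windowOverlap hik him]
  split_ifs <;> simp

theorem appendOccCount_of_le {k m : ℕ} (a c c' : Fin k → Bool) {i : ℕ} (hki : k ≤ i)
    (him : i ≤ m) : appendOccCount a c m i = appendOccCount a c' m i := by
  have hvacuous : ∀ d : Fin k → Bool, ∀ p : Fin k, i ≤ p → (List.ofFn d)[p - i]? = some (a p) :=
    fun d p hp => absurd p.isLt (by omega)
  rw [appendOccCount_eq _ _ him, appendOccCount_eq _ _ him, if_pos (hvacuous c),
    if_pos (hvacuous c')]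

theorem sum_occCount_append {k : ℕ} (a c : Fin k → Bool) (m : ℕ) :
    ∑ y : Fin m → Bool, occCount c (Fin.append a y) =
      ∑ i ∈ range (m + 1), appendOccCount a c m i := by
  simp only [occCount_eq_card_filter, Nat.add_sub_cancel_left, card_filter, appendOccCount]
  exact sum_comm

theorem two_pow_le_sum_occCount_append_sub {k : ℕ} {a b : Fin k → Bool} (hab : a ≠ b) (m : ℕ) :
    (2 : ℤ) ^ (m - min m (k - 1)) ≤
      ∑ y : Fin m → Bool, ((occCount a (Fin.append a y) : ℤ) - occCount b (Fin.append a y)) := by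
  rw [sum_sub_distrib]
  simp only [← Nat.cast_sum, sum_occCount_append]
  push_cast
  rw [← sum_sub_distrib]
  refine two_pow_le_sum_range (k := k) ?_ (fun i _ hik him => ?_) (fun i hki him => ?_) m le_rfl
  · simp [appendOccCount_zero, Ne.symm hab]
  · have hb : (appendOccCount a b m i : ℤ) ≤ 2 ^ (m - i) :=
      mod_cast appendOccCount_le a b hik.le him
    linarith [(appendOccCount a a m i).cast_nonneg (α := ℤ)]
  · rw [appendOccCount_of_le a a b hki him, sub_self]

theorem norm_transformVec_sub_sq {k N : ℕ} (a b : Fin k → Bool) :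
    ‖transformVec k N a - transformVec k N b‖ ^ 2 =
      ((∑ x : Fin N → Bool, ((occCount a x : ℤ) - occCount b x) ^ 2 : ℤ) : ℝ) := by
  rw [EuclideanSpace.norm_sq_eq]
  push_cast
  simp [transformVec]

theorem two_pow_le_norm_transformVec_sub_sq {k : ℕ} {a b : Fin k → Bool} (hab : a ≠ b) (n : ℕ) :
    (2 : ℝ) ^ n ≤ ‖transformVec k (k + (k + n)) a - transformVec k (k + (k + n)) b‖ ^ 2 := by
  rw [norm_transformVec_sub_sq]
  have hsum := (two_pow_le_sum_occCount_append_sub hab (k + n)).trans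
    (sum_comp_le_sum_sq (fun x => (occCount a x : ℤ) - occCount b x) (Fin.append_right_injective a))
  calc (2 : ℝ) ^ n ≤ (2 : ℝ) ^ (k + n - min (k + n) (k - 1)) :=
        pow_le_pow_right₀ one_le_two (by omega)
    _ ≤ _ := mod_cast hsum

theorem exists_le_norm_transformVec_sub {k : ℕ} {a b : Fin k → Bool} (hab : a ≠ b) (C : ℝ) :
    ∃ N, k ≤ N ∧ C ≤ ‖transformVec k N a - transformVec k N b‖ := by
  obtain ⟨n, hn⟩ := pow_unbounded_of_one_lt (C ^ 2) one_lt_two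
  refine ⟨k + (k + n), by omega, ?_⟩
  nlinarith [two_pow_le_norm_transformVec_sub_sq hab n,
    norm_nonneg (transformVec k (k + (k + n)) a - transformVec k (k + (k + n)) b)]

theorem stmt18_general (k : ℕ) (a b : Fin k → Bool) (hab : a ≠ b)
    (δ : ℝ) (hδ1 : δ < 1)
    (M : ℕ → ℕ)
    (Φ : (N : ℕ) → EuclideanSpace ℝ (Fin N → Bool) →ₗ[ℝ] EuclideanSpace ℝ (Fin (M N)))
    (hRIP : ∀ N, k ≤ N →
      (1 - δ) * ‖transformVec k N a - transformVec k N b‖ ≤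
        ‖Φ N (transformVec k N a - transformVec k N b)‖)
    (D : ℝ) :
    ∃ N : ℕ, k ≤ N ∧ D ≤ ‖Φ N (transformVec k N a) - Φ N (transformVec k N b)‖ := by
  have hδ : 0 < 1 - δ := sub_pos.2 hδ1
  obtain ⟨N, hkN, hN⟩ := exists_le_norm_transformVec_sub hab (D / (1 - δ))
  refine ⟨N, hkN, ?_⟩
  calc D = (1 - δ) * (D / (1 - δ)) := (mul_div_cancel₀ D hδ.ne').symm
    _ ≤ (1 - δ) * ‖transformVec k N a - transformVec k N b‖ := by gcongr
    _ ≤ ‖Φ N (transformVec k N a) - Φ N (transformVec k N b)‖ := by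
      rw [← map_sub]
      exact hRIP N hkN

theorem stmt18 (k : ℕ) (hk : 1 ≤ k) (a b : Fin k → Bool) (hab : a ≠ b)
    (δ : ℝ) (hδ0 : 0 ≤ δ) (hδ1 : δ < 1)
    (M : ℕ → ℕ)
    (Φ : (N : ℕ) → EuclideanSpace ℝ (Fin N → Bool) →ₗ[ℝ] EuclideanSpace ℝ (Fin (M N)))
    (hRIP : ∀ N, k ≤ N →
      (1 - δ) * ‖transformVec k N a - transformVec k N b‖ ≤
        ‖Φ N (transformVec k N a - transformVec k N b)‖)
    (D : ℝ) (hD : 0 ≤ D) :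
    ∃ N : ℕ, k ≤ N ∧ D ≤ ‖Φ N (transformVec k N a) - Φ N (transformVec k N b)‖ :=
  stmt18_general k a b hab δ hδ1 M Φ hRIP D
end
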